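/- arXiv:nlin/0601007 — 3 statements merged into one kernel-verified Lean document; each statement's English description precedes it below -/
import Mathlib

section
/- Let L be a Lie algebra over a field of characteristic zero which decomposes as a vector-space direct sum L = L₊ ⊕ L₋ of two Lie subalgebras, with P₊, P₋ the linear projections onto L₊ and L₋. Set R := (P₊ − P₋)/2. Then the R-deformed bracket [a,b]_R := [R a, b] + [a, R b] is bilinear, alternating, and satisfies the Jacobi identity; that is, (L, [·,·]_R) is again a Lie algebra. -/
/-- If a Lie algebra `L` over a field of characteristic zero decomposes as a
vector-space direct sum `L = L₊ ⊕ L₋` of two Lie subalgebras, with projections `P₊, P₋`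
and `R := (P₊ − P₋)/2`, then the `R`-deformed bracket `[a,b]_R := [R a, b] + [a, R b]`
is bilinear, alternating and satisfies the Jacobi identity, i.e. `(L, [·,·]_R)` is again
a Lie algebra. -/
theorem r_bracket_is_lie_bracket
    {k L : Type*} [Field k] [CharZero k] [LieRing L] [LieAlgebra k L]
    (Lp Lm : LieSubalgebra k L)
    (Pp Pm : L →ₗ[k] L)
    (hPpRange : ∀ x, Pp x ∈ Lp) (hPmRange : ∀ x, Pm x ∈ Lm)
    (hSum : ∀ x, Pp x + Pm x = x)
    (hPpId : ∀ x ∈ Lp, Pp x = x)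
    (hPmId : ∀ x ∈ Lm, Pm x = x)
    (R : L → L) (hR : ∀ x, R x = (1 / 2 : k) • (Pp x - Pm x))
    (br : L → L → L) (hbr : ∀ a b, br a b = ⁅R a, b⁆ + ⁅a, R b⁆) :
    (∀ a b c, br (a + b) c = br a c + br b c) ∧
    (∀ a b c, br a (b + c) = br a b + br a c) ∧
    (∀ (s : k) (a b : L), br (s • a) b = s • br a b) ∧
    (∀ (s : k) (a b : L), br a (s • b) = s • br a b) ∧
    (∀ a, br a a = 0) ∧
    (∀ a b c, br a (br b c) + br b (br c a) + br c (br a b) = 0) := by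
  -- key formula: br a b = ⁅Pp a, Pp b⁆ - ⁅Pm a, Pm b⁆
  have gen : ∀ ap am bp bm : L,
      ⁅(1/2:k) • (ap - am), bp + bm⁆ + ⁅ap + am, (1/2:k) • (bp - bm)⁆
        = ⁅ap, bp⁆ - ⁅am, bm⁆ := by
    intro ap am bp bm
    simp only [smul_lie, lie_smul, sub_lie, lie_sub, add_lie, lie_add]
    module
  have key : ∀ a b, br a b = ⁅Pp a, Pp b⁆ - ⁅Pm a, Pm b⁆ := by
    intro a b
    have h := gen (Pp a) (Pm a) (Pp b) (Pm b)
    rw [hSum a, hSum b] at h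
    rw [hbr, hR, hR]
    exact h
  have hPp0 : ∀ x ∈ Lm, Pp x = 0 := by
    intro x hx
    have h := hSum x
    rw [hPmId x hx] at h
    exact add_eq_right.mp h
  have hPm0 : ∀ x ∈ Lp, Pm x = 0 := by
    intro x hx
    have h := hSum x
    rw [hPpId x hx] at h
    exact add_eq_left.mp h
  have hPpbr : ∀ a b, Pp (br a b) = ⁅Pp a, Pp b⁆ := by
    intro a b
    rw [key, map_sub, hPpId _ (Lp.lie_mem (hPpRange a) (hPpRange b)),
      hPp0 _ (Lm.lie_mem (hPmRange a) (hPmRange b)), sub_zero]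
  have hPmbr : ∀ a b, Pm (br a b) = -⁅Pm a, Pm b⁆ := by
    intro a b
    rw [key, map_sub, hPmId _ (Lm.lie_mem (hPmRange a) (hPmRange b)),
      hPm0 _ (Lp.lie_mem (hPpRange a) (hPpRange b)), zero_sub]
  refine ⟨?_, ?_, ?_, ?_, ?_, ?_⟩
  · intro a b c; simp only [key, map_add, add_lie]; abel
  · intro a b c; simp only [key, map_add, lie_add]; abel
  · intro s a b; simp only [key, map_smul, smul_lie, smul_sub]
  · intro s a b; simp only [key, map_smul, lie_smul, smul_sub]
  · intro a; rw [hbr]; rw [← lie_skew]; abel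
  · intro a b c
    rw [key a (br b c), key b (br c a), key c (br a b), hPpbr, hPpbr, hPpbr,
      hPmbr, hPmbr, hPmbr]
    simp only [lie_neg, sub_neg_eq_add]
    have jp := lie_jacobi (Pp a) (Pp b) (Pp c)
    have jm := lie_jacobi (Pm a) (Pm b) (Pm c)
    linear_combination (norm := abel) jp + jm
end

section
/- Let H be a complex Hilbert space, A : ℝ → L(H,H), and let l : ℝ → L(H,H) be differentiable with l'(t) = A(t)∘l(t) − l(t)∘A(t). Let f, f*, Φ, Φ* : ℝ → H be differentiable with f' = A f, Φ' = A Φ, (f*)' = −A* f*, (Φ*)' = −A* Φ*. Then for every natural number s the function t ↦ ⟪f*(t), l(t)^s f(t)⟫ + ⟪Φ*(t), l(t)^s Φ(t)⟫ is constant in t. (This is the invariance of the eigenvalue functionals λₖ^s of representation (21) under the extended Lax flows (7), (11), (12).) -/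
open ContinuousLinearMap in
lemma pow_lax {H : Type*} [NormedAddCommGroup H] [InnerProductSpace ℂ H]
    (A l : ℝ → H →L[ℂ] H)
    (hl : ∀ t, HasDerivAt l ((A t).comp (l t) - (l t).comp (A t)) t) (s : ℕ) (t : ℝ) :
    HasDerivAt (fun t => l t ^ s) ((A t).comp (l t ^ s) - (l t ^ s).comp (A t)) t := by
  induction s with
  | zero =>
    have h := hasDerivAt_const t (1 : H →L[ℂ] H)
    convert (by simpa using h : HasDerivAt (fun t => l t ^ 0) 0 t) using 1
    simp [← ContinuousLinearMap.mul_def]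
  | succ n ih =>
    have h := ih.mul (hl t)
    have e : ((fun t => l t ^ n) * l) = fun t => l t ^ (n+1) := by
      funext x; rw [Pi.mul_apply, pow_succ]
    rw [e] at h
    refine h.congr_deriv ?_
    simp only [← ContinuousLinearMap.mul_def, pow_succ]
    noncomm_ring

lemma term_deriv_zero {H : Type*} [NormedAddCommGroup H] [InnerProductSpace ℂ H]
    [CompleteSpace H]
    (A l : ℝ → H →L[ℂ] H)
    (hl : ∀ t, HasDerivAt l ((A t).comp (l t) - (l t).comp (A t)) t)
    (g gs : ℝ → H)
    (hg : ∀ t, HasDerivAt g (A t (g t)) t)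
    (hgs : ∀ t, HasDerivAt gs (-(ContinuousLinearMap.adjoint (A t) (gs t))) t)
    (s : ℕ) (t : ℝ) :
    HasDerivAt (fun t => (inner ℂ (gs t) ((l t ^ s) (g t)) : ℂ)) 0 t := by
  set R := ContinuousLinearMap.restrictScalarsL ℂ H H ℝ ℝ
  have hc : HasDerivAt (fun t => R (l t ^ s))
      (R ((A t).comp (l t ^ s) - (l t ^ s).comp (A t))) t :=
    (R.hasFDerivAt.comp_hasDerivAt t (pow_lax A l hl s t))
  have hval : HasDerivAt (fun t => (R (l t ^ s)) (g t))
      ((R ((A t).comp (l t ^ s) - (l t ^ s).comp (A t))) (g t)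
        + (R (l t ^ s)) (A t (g t))) t := hc.clm_apply (hg t)
  have hval' : HasDerivAt (fun t => (l t ^ s) (g t))
      (((A t).comp (l t ^ s) - (l t ^ s).comp (A t)) (g t)
        + (l t ^ s) (A t (g t))) t := hval
  have hinner := (hgs t).inner ℂ hval'
  refine hinner.congr_deriv ?_
  simp only [ContinuousLinearMap.sub_apply, ContinuousLinearMap.comp_apply,
    inner_add_right, inner_sub_right, inner_neg_left]
  rw [ContinuousLinearMap.adjoint_inner_left]
  ring



/-- Let `H` be a complex Hilbert space, `A : ℝ → L(H,H)`, and `l : ℝ → L(H,H)`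
differentiable with `l'(t) = A(t)∘l(t) − l(t)∘A(t)`.  Let `f, f*, Φ, Φ* : ℝ → H` be
differentiable with `f' = A f`, `Φ' = A Φ`, `(f*)' = −A* f*`, `(Φ*)' = −A* Φ*`.  Then for
every natural number `s` the function `t ↦ ⟪f*(t), l(t)^s f(t)⟫ + ⟪Φ*(t), l(t)^s Φ(t)⟫`
is constant in `t`: the eigenvalue functionals `λₖ^s` of representation (21) are
invariants of the extended Lax flows. -/
theorem eigenvalue_functionals_invariant
    {H : Type*} [NormedAddCommGroup H] [InnerProductSpace ℂ H] [CompleteSpace H]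
    (A : ℝ → H →L[ℂ] H)
    (l : ℝ → H →L[ℂ] H)
    (hl : ∀ t, HasDerivAt l ((A t).comp (l t) - (l t).comp (A t)) t)
    (f Φ fs Φs : ℝ → H)
    (hf : ∀ t, HasDerivAt f (A t (f t)) t)
    (hΦ : ∀ t, HasDerivAt Φ (A t (Φ t)) t)
    (hfs : ∀ t, HasDerivAt fs (-(ContinuousLinearMap.adjoint (A t) (fs t))) t)
    (hΦs : ∀ t, HasDerivAt Φs (-(ContinuousLinearMap.adjoint (A t) (Φs t))) t) :
    ∀ (s : ℕ) (t₁ t₂ : ℝ),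
      (inner ℂ (fs t₁) ((l t₁ ^ s) (f t₁)) : ℂ) + inner ℂ (Φs t₁) ((l t₁ ^ s) (Φ t₁))
        = (inner ℂ (fs t₂) ((l t₂ ^ s) (f t₂)) : ℂ) + inner ℂ (Φs t₂) ((l t₂ ^ s) (Φ t₂)) := by
  intro s t₁ t₂
  have key : ∀ t, HasDerivAt (fun t =>
      (inner ℂ (fs t) ((l t ^ s) (f t)) : ℂ) + inner ℂ (Φs t) ((l t ^ s) (Φ t))) 0 t := by
    intro t
    simpa using (term_deriv_zero A l hl f fs hf hfs s t).fun_add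
      (term_deriv_zero A l hl Φ Φs hΦ hΦs s t)
  have hconst := is_const_of_deriv_eq_zero (𝕜 := ℝ)
    (f := fun t => (inner ℂ (fs t) ((l t ^ s) (f t)) : ℂ) + inner ℂ (Φs t) ((l t ^ s) (Φ t)))
    (fun t => (key t).differentiableAt) (fun t => (key t).deriv)
  exact hconst t₁ t₂
end

section
/- Let 𝓐 be a complex Banach algebra and π₊, π₋ : 𝓐 → 𝓐 continuous linear maps with π₊ + π₋ = id. Let P, M, l : ℝ² → 𝓐 be maps of the variables (t, τ) with l twice continuously differentiable and P, M differentiable, satisfying ∂P/∂τ = π₊([P, M]), ∂M/∂t = π₋([P, M]), ∂l/∂t = [P, l], and ∂l/∂τ = −[M, l]. Then ∂/∂τ([P, l]) = ∂/∂t(−[M, l]), i.e. the flow generated by P and the flow generated by −M commute on l. (This is the first commutation relation [d/dtₙ, d/dτ_{1,k}] = 0 of Theorem 4, which follows from the identities d(∇γₙ(l))₊/dτ = [(∇γₙ(l))₊, M]₊ and dM/dtₙ = [(∇γₙ(l))₊, M]₋.) -/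
/-- Let `𝓐` be a complex Banach algebra and `π₊, π₋ : 𝓐 → 𝓐` continuous
linear maps with `π₊ + π₋ = id`.  Let `P, M, l : ℝ² → 𝓐` with `l` twice continuously
differentiable and `P, M` differentiable, satisfying `∂P/∂τ = π₊([P, M])`,
`∂M/∂t = π₋([P, M])`, `∂l/∂t = [P, l]` and `∂l/∂τ = −[M, l]`.  Then
`∂/∂τ([P, l]) = ∂/∂t(−[M, l])`, i.e. the flow generated by `P` and the flow generated by
`−M` commute on `l` — the first commutation relation `[d/dtₙ, d/dτ_{1,k}] = 0` of
Theorem 4. -/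
theorem hierarchy_and_ghost_flow_commute
    {𝓐 : Type*} [NormedRing 𝓐] [NormedAlgebra ℂ 𝓐] [CompleteSpace 𝓐]
    (πp πm : 𝓐 →L[ℂ] 𝓐)
    (hπ : πp + πm = ContinuousLinearMap.id ℂ 𝓐)
    (P M l : ℝ × ℝ → 𝓐)
    (hl : ContDiff ℝ 2 l)
    (hP : Differentiable ℝ P) (hM : Differentiable ℝ M)
    (hPτ : ∀ t τ : ℝ, deriv (fun s => P (t, s)) τ
      = πp (P (t, τ) * M (t, τ) - M (t, τ) * P (t, τ)))
    (hMt : ∀ t τ : ℝ, deriv (fun s => M (s, τ)) t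
      = πm (P (t, τ) * M (t, τ) - M (t, τ) * P (t, τ)))
    (hlt : ∀ t τ : ℝ, deriv (fun s => l (s, τ)) t
      = P (t, τ) * l (t, τ) - l (t, τ) * P (t, τ))
    (hlτ : ∀ t τ : ℝ, deriv (fun s => l (t, s)) τ
      = -(M (t, τ) * l (t, τ) - l (t, τ) * M (t, τ))) :
    ∀ t τ : ℝ,
      deriv (fun s => P (t, s) * l (t, s) - l (t, s) * P (t, s)) τ
        = deriv (fun s => -(M (s, τ) * l (s, τ) - l (s, τ) * M (s, τ))) t := by
  intro t τ
  have hPt : Differentiable ℝ (fun s => P (t, s)) :=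
    hP.comp ((differentiable_const t).prodMk differentiable_id)
  have hMt' : Differentiable ℝ (fun s : ℝ => M (s, τ)) :=
    hM.comp (differentiable_id.prodMk (differentiable_const τ))
  have hld : Differentiable ℝ l := hl.differentiable (by norm_num)
  have hlτ' : Differentiable ℝ (fun s => l (t, s)) :=
    hld.comp ((differentiable_const t).prodMk differentiable_id)
  have hlt' : Differentiable ℝ (fun s : ℝ => l (s, τ)) :=
    hld.comp (differentiable_id.prodMk (differentiable_const τ))
  rw [deriv_fun_sub ((hPt τ).fun_mul (hlτ' τ)) ((hlτ' τ).fun_mul (hPt τ)),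
      deriv_fun_mul (hPt τ) (hlτ' τ), deriv_fun_mul (hlτ' τ) (hPt τ),
      deriv.fun_neg, deriv_fun_sub ((hMt' t).fun_mul (hlt' t)) ((hlt' t).fun_mul (hMt' t)),
      deriv_fun_mul (hMt' t) (hlt' t), deriv_fun_mul (hlt' t) (hMt' t),
      hPτ t τ, hMt t τ, hlt t τ, hlτ t τ]
  have hC : πp (P (t, τ) * M (t, τ) - M (t, τ) * P (t, τ))
      + πm (P (t, τ) * M (t, τ) - M (t, τ) * P (t, τ))
      = P (t, τ) * M (t, τ) - M (t, τ) * P (t, τ) := by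
    have := congrArg (fun f : 𝓐 →L[ℂ] 𝓐 => f (P (t, τ) * M (t, τ) - M (t, τ) * P (t, τ))) hπ
    simpa using this
  set A := πp (P (t, τ) * M (t, τ) - M (t, τ) * P (t, τ)) with hA
  set B := πm (P (t, τ) * M (t, τ) - M (t, τ) * P (t, τ)) with hB
  have hB2 : B = P (t, τ) * M (t, τ) - M (t, τ) * P (t, τ) - A := by
    rw [← hC]; abel
  rw [hB2]
  noncomm_ring
end
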